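/- arXiv:2303.11467 — 4 statements merged into one kernel-verified Lean document; each statement's English description precedes it below -/
import Mathlib

section
/- Let A ∈ ℝ^{n×n} be an irreducible rate matrix and let z ∈ ℝ^n be a vector with all entries positive satisfying z^T A = 0 and 1^T z = 1. Then lim_{t→∞} e^{At} = 1·z^T, i.e., the matrix exponential e^{At} converges entrywise to the rank-one matrix 1·z^T as t → ∞. -/
/-!
Write `P t = exp (t • A)`. Shifting `A` by a multiple of the identity makes it nonnegative, so
`P t` is row stochastic for `t ≥ 0`, and irreducibility makes every entry of `P 1` positive, say at
least `δ`. A stochastic matrix with all entries at least `δ` shrinks the spread of a vector by the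
factor `1 - nδ < 1` (Doeblin), so every column of `P t = P (t - ⌊t⌋) * P 1 ^ ⌊t⌋` lies within
`(1 - nδ) ^ ⌊t⌋` of a constant. As `zᵀ P t = zᵀ`, the entry `z j` is a convex combination of the
`j`-th column of `P t`, hence within the same distance of that constant.
-/

open Matrix Filter

/-- A matrix is Metzler if all its off-diagonal entries are nonnegative. -/
def IsMetzler {n : ℕ} (Q : Matrix (Fin n) (Fin n) ℝ) : Prop :=
  ∀ i j, i ≠ j → 0 ≤ Q i j

/-- A rate matrix is a Metzler matrix whose rows each sum to zero. -/
def IsRateMatrix {n : ℕ} (Q : Matrix (Fin n) (Fin n) ℝ) : Prop :=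
  IsMetzler Q ∧ Q *ᵥ (fun _ => (1 : ℝ)) = 0

/-- A matrix is irreducible if the directed graph with an edge `i → j` whenever
`i ≠ j` and `Q i j ≠ 0` is strongly connected. -/
def IsIrreducibleMatrix {n : ℕ} (Q : Matrix (Fin n) (Fin n) ℝ) : Prop :=
  ∀ i j : Fin n, i ≠ j → Relation.TransGen (fun a b => a ≠ b ∧ Q a b ≠ 0) i j

open NormedSpace
open scoped Nat

namespace Matrix

variable {ι : Type*}

theorem isIrreducible_of_transGen {N : Matrix ι ι ℝ} (hN : ∀ i j, 0 ≤ N i j)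
    (h : ∀ i j, Relation.TransGen (fun a b => 0 < N a b) i j) : N.IsIrreducible := by
  let := toQuiver N
  refine ⟨hN, fun i j => ?_⟩
  induction h i j with
  | single hij => exact ⟨Quiver.Path.nil.cons ⟨hij⟩, by simp⟩
  | tail _ hbc ih =>
    obtain ⟨q, -⟩ := ih
    exact ⟨q.cons ⟨hbc⟩, by simp⟩

section Exp

variable [Fintype ι] [DecidableEq ι]

theorem hasSum_exp_apply (M : Matrix ι ι ℝ) (i j : ι) :
    HasSum (fun k : ℕ => (k !⁻¹ : ℝ) * (M ^ k) i j) (exp M i j) := by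
  open scoped Norms.Operator in
  have h := exp_series_hasSum_exp' (𝕂 := ℝ) M
  exact Pi.hasSum.mp (Pi.hasSum.mp h i) j

theorem exp_apply_nonneg {N : Matrix ι ι ℝ} (hN : ∀ i j, 0 ≤ N i j) (i j : ι) :
    0 ≤ exp N i j :=
  (hasSum_exp_apply N i j).nonneg fun k => mul_nonneg (by positivity) (pow_apply_nonneg hN k i j)

theorem IsIrreducible.exp_apply_pos {N : Matrix ι ι ℝ} (hN : N.IsIrreducible) (i j : ι) :
    0 < exp N i j := by
  obtain ⟨k, -, hk⟩ := (isIrreducible_iff_exists_pow_pos hN.nonneg).mp hN i j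
  calc 0 < (k !⁻¹ : ℝ) * (N ^ k) i j := by positivity
    _ ≤ exp N i j := le_hasSum (hasSum_exp_apply N i j) k fun m _ =>
        mul_nonneg (by positivity) (pow_apply_nonneg hN.nonneg m i j)

theorem exp_mulVec_of_mulVec_eq_zero {M : Matrix ι ι ℝ} {v : ι → ℝ} (hMv : M *ᵥ v = 0) :
    exp M *ᵥ v = v := by
  open scoped Norms.Operator in
  have h := (exp_series_hasSum_exp' (𝕂 := ℝ) M).map (mulVec.addMonoidHomLeft v)
    (continuous_id.matrix_mulVec continuous_const)
  refine h.unique (hasSum_single 0 fun k hk => ?_) |>.trans ?_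
  · obtain ⟨k, rfl⟩ := Nat.exists_eq_succ_of_ne_zero hk
    simp [mulVec.addMonoidHomLeft, smul_mulVec, pow_succ, ← mulVec_mulVec, hMv]
  · simp [mulVec.addMonoidHomLeft]

theorem vecMul_exp_of_vecMul_eq_zero {M : Matrix ι ι ℝ} {v : ι → ℝ} (hvM : v ᵥ* M = 0) :
    v ᵥ* exp M = v := by
  rw [← mulVec_transpose, ← exp_transpose]
  exact exp_mulVec_of_mulVec_eq_zero (by rwa [mulVec_transpose])

theorem exp_smul_one (c : ℝ) : exp (c • (1 : Matrix ι ι ℝ)) = Real.exp c • 1 := by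
  open scoped Norms.Operator in
  have h := (algebraMap_exp_comm (𝕂 := ℝ) (𝔸 := Matrix ι ι ℝ) c).symm
  rw [Algebra.algebraMap_eq_smul_one, Algebra.algebraMap_eq_smul_one, ← Real.exp_eq_exp_ℝ] at h
  exact h

theorem exp_eq_real_exp_neg_smul_exp_add_smul_one (M : Matrix ι ι ℝ) (c : ℝ) :
    exp M = Real.exp (-c) • exp (M + c • 1) := by
  rw [exp_add_of_commute _ _ ((Commute.one_right M).smul_right c), exp_smul_one, mul_smul_one,
    smul_smul, ← Real.exp_add, neg_add_cancel, Real.exp_zero, one_smul]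

end Exp

section Doeblin

variable [Fintype ι]

theorem one_sub_card_mul_nonneg {p : ι → ℝ} {δ : ℝ} (hp : ∀ j, δ ≤ p j) (hsum : ∑ j, p j = 1) :
    0 ≤ 1 - Fintype.card ι * δ := by
  have h : ∑ j, (p j - δ) = 1 - Fintype.card ι * δ := by
    simp [Finset.sum_sub_distrib, hsum]
  exact h ▸ Finset.sum_nonneg fun j _ => sub_nonneg.mpr (hp j)

theorem abs_dotProduct_sub_le {p y : ι → ℝ} {δ c w : ℝ} (hp : ∀ j, δ ≤ p j)
    (hsum : ∑ j, p j = 1) (hy : ∀ j, |y j - c| ≤ w) :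
    |p ⬝ᵥ y - ((1 - Fintype.card ι * δ) * c + δ * ∑ j, y j)| ≤ (1 - Fintype.card ι * δ) * w := by
  have hcentre : p ⬝ᵥ y - ((1 - Fintype.card ι * δ) * c + δ * ∑ j, y j)
      = ∑ j, (p j - δ) * (y j - c) := by
    simp only [dotProduct, sub_mul, mul_sub, Finset.sum_sub_distrib, ← Finset.sum_mul,
      ← Finset.mul_sum, hsum, Finset.sum_const, Finset.card_univ, nsmul_eq_mul]
    ring
  have hweights : ∑ j, (p j - δ) * w = (1 - Fintype.card ι * δ) * w := by
    simp [← Finset.sum_mul, Finset.sum_sub_distrib, hsum]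
  rw [hcentre, ← hweights]
  refine (Finset.abs_sum_le_sum_abs _ _).trans (Finset.sum_le_sum fun j _ => ?_)
  rw [abs_mul, abs_of_nonneg (sub_nonneg.mpr (hp j))]
  exact mul_le_mul_of_nonneg_left (hy j) (sub_nonneg.mpr (hp j))

theorem exists_abs_mulVec_sub_le {P : Matrix ι ι ℝ} {y : ι → ℝ} {δ c w : ℝ}
    (hP : ∀ i j, δ ≤ P i j) (hrow : ∀ i, ∑ j, P i j = 1) (hy : ∀ j, |y j - c| ≤ w) :
    ∃ c', ∀ i, |(P *ᵥ y) i - c'| ≤ (1 - Fintype.card ι * δ) * w :=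
  ⟨_, fun i => abs_dotProduct_sub_le (hP i) (hrow i) hy⟩

theorem exists_abs_pow_mulVec_sub_le [DecidableEq ι] {P : Matrix ι ι ℝ} {y : ι → ℝ} {δ c w : ℝ}
    (hP : ∀ i j, δ ≤ P i j) (hrow : ∀ i, ∑ j, P i j = 1) (hy : ∀ j, |y j - c| ≤ w) (k : ℕ) :
    ∃ c', ∀ i, |(P ^ k *ᵥ y) i - c'| ≤ (1 - Fintype.card ι * δ) ^ k * w := by
  induction k with
  | zero => exact ⟨c, by simpa using hy⟩
  | succ k ih =>
    obtain ⟨c', hc'⟩ := ih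
    rw [pow_succ', ← mulVec_mulVec, pow_succ', mul_assoc]
    exact exists_abs_mulVec_sub_le hP hrow hc'

end Doeblin

end Matrix

section RateMatrix

variable {n : ℕ} {A : Matrix (Fin n) (Fin n) ℝ}

theorem IsMetzler.add_smul_one_apply_nonneg (hA : IsMetzler A) {c : ℝ}
    (hc : ∀ i, 0 ≤ A i i + c) (i j : Fin n) : 0 ≤ (A + c • 1) i j := by
  rcases eq_or_ne i j with rfl | hij
  · simpa using hc i
  · simpa [one_apply_ne hij] using hA i j hij

theorem IsMetzler.exp_smul_apply_nonneg (hA : IsMetzler A) {t : ℝ} (ht : 0 ≤ t) (i j : Fin n) :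
    0 ≤ exp (t • A) i j := by
  obtain ⟨m, hm⟩ := (Set.finite_range fun i => A i i).bddBelow
  have hc : ∀ i, 0 ≤ A i i + -m := fun i => by linarith [hm ⟨i, rfl⟩]
  have hshift : t • A + (t * -m) • 1 = t • (A + (-m) • 1) := by
    rw [smul_add, smul_smul]
  rw [exp_eq_real_exp_neg_smul_exp_add_smul_one _ (t * -m), hshift, Matrix.smul_apply,
    smul_eq_mul]
  refine mul_nonneg (Real.exp_pos _).le (exp_apply_nonneg (fun i j => ?_) i j)
  exact mul_nonneg ht (hA.add_smul_one_apply_nonneg hc i j)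

theorem IsRateMatrix.exp_smul_mem_rowStochastic (hA : IsRateMatrix A) {t : ℝ} (ht : 0 ≤ t) :
    exp (t • A) ∈ rowStochastic ℝ (Fin n) := by
  refine ⟨hA.1.exp_smul_apply_nonneg ht, exp_mulVec_of_mulVec_eq_zero ?_⟩
  rw [smul_mulVec]
  exact (congrArg (t • ·) hA.2).trans (smul_zero t)

theorem IsIrreducibleMatrix.exp_apply_pos (hirr : IsIrreducibleMatrix A) (hA : IsMetzler A)
    (i j : Fin n) : 0 < exp A i j := by
  obtain ⟨m, hm⟩ := (Set.finite_range fun i => A i i).bddBelow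
  have hc : ∀ i, 0 < A i i + (1 - m) := fun i => by linarith [hm ⟨i, rfl⟩]
  have hN : (A + (1 - m) • 1).IsIrreducible := by
    refine isIrreducible_of_transGen (hA.add_smul_one_apply_nonneg fun i => (hc i).le)
      fun a b => ?_
    rcases eq_or_ne a b with rfl | hab
    · exact .single (by simpa using hc a)
    · refine Relation.TransGen.mono (fun x y ⟨hxy, hA0⟩ => ?_) a b (hirr a b hab)
      simpa [one_apply_ne hxy] using (hA x y hxy).lt_of_ne' hA0
  rw [exp_eq_real_exp_neg_smul_exp_add_smul_one A (1 - m), Matrix.smul_apply, smul_eq_mul]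
  exact mul_pos (Real.exp_pos _) (hN.exp_apply_pos i j)

theorem IsRateMatrix.exists_forall_abs_exp_smul_apply_sub_le [NeZero n] (hA : IsRateMatrix A)
    (hirr : IsIrreducibleMatrix A) :
    ∃ r, 0 ≤ r ∧ r < 1 ∧ ∀ t : ℝ, 0 ≤ t → ∀ j, ∃ c, ∀ i, |exp (t • A) i j - c| ≤ r ^ ⌊t⌋₊ := by
  obtain ⟨p, hp⟩ := Finite.exists_min fun q : Fin n × Fin n => exp A q.1 q.2
  have hδ : ∀ i j, exp A p.1 p.2 ≤ exp A i j := fun i j => hp (i, j)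
  have hP1 : exp A ∈ rowStochastic ℝ (Fin n) := by
    simpa using hA.exp_smul_mem_rowStochastic zero_le_one
  have hrow := sum_row_of_mem_rowStochastic hP1
  refine ⟨1 - n * exp A p.1 p.2, by simpa using one_sub_card_mul_nonneg (hδ 0) (hrow 0),
    sub_lt_self _ (mul_pos (by exact_mod_cast NeZero.pos n) (hirr.exp_apply_pos hA.1 _ _)),
    fun t ht j => ?_⟩
  obtain ⟨c, hc⟩ := exists_abs_pow_mulVec_sub_le (P := exp A) (y := Pi.single j 1) (c := 0)
    (w := 1) hδ hrow (fun i => by rcases eq_or_ne i j with rfl | hij <;> simp [*]) ⌊t⌋₊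
  have hPs := hA.exp_smul_mem_rowStochastic (sub_nonneg.mpr (Nat.floor_le ht))
  obtain ⟨c', hc'⟩ := exists_abs_mulVec_sub_le (P := exp ((t - ⌊t⌋₊) • A)) (δ := 0)
    (fun _ _ => nonneg_of_mem_rowStochastic hPs) (sum_row_of_mem_rowStochastic hPs) hc
  have hsplit : exp (t • A) = exp ((t - ⌊t⌋₊) • A) * exp A ^ ⌊t⌋₊ := by
    rw [← Matrix.exp_nsmul, ← Nat.cast_smul_eq_nsmul ℝ,
      ← Matrix.exp_add_of_commute _ _ (((Commute.refl A).smul_left _).smul_right _), ← add_smul,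
      sub_add_cancel]
  refine ⟨c', fun i => ?_⟩
  have hci := hc' i
  rw [mulVec_mulVec, ← hsplit, mulVec_single_one] at hci
  simpa using hci

end RateMatrix

/-- Let `A` be an irreducible rate matrix and `z` an entrywise positive vector
with `zᵀ A = 0` and `1ᵀ z = 1`.  Then `e^{At} → 1·zᵀ` as `t → ∞`. -/
theorem exp_tendsto_spectral_projector {n : ℕ} (A : Matrix (Fin n) (Fin n) ℝ)
    (hrate : IsRateMatrix A) (hirr : IsIrreducibleMatrix A)
    (z : Fin n → ℝ) (hz_pos : ∀ i, 0 < z i)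
    (hz_left : z ᵥ* A = 0) (hz_sum : ∑ i, z i = 1) :
    Tendsto (fun t : ℝ => NormedSpace.exp (t • A)) atTop
      (nhds (vecMulVec (fun _ => (1 : ℝ)) z)) := by
  have : NeZero n := ⟨by rintro rfl; simp at hz_sum⟩
  obtain ⟨r, hr0, hr1, hconc⟩ := hrate.exists_forall_abs_exp_smul_apply_sub_le hirr
  have hbound : ∀ t : ℝ, 0 ≤ t → ∀ i j, |exp (t • A) i j - z j| ≤ 2 * r ^ ⌊t⌋₊ := by
    intro t ht i j
    obtain ⟨c, hc⟩ := hconc t ht j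
    have hzj : z ⬝ᵥ (fun a => exp (t • A) a j) = z j :=
      congrFun (vecMul_exp_of_vecMul_eq_zero (by rw [vecMul_smul, hz_left, smul_zero])) j
    have hzc : |z j - c| ≤ r ^ ⌊t⌋₊ := by
      simpa [hzj] using abs_dotProduct_sub_le (δ := 0) (fun a => (hz_pos a).le) hz_sum hc
    calc |exp (t • A) i j - z j| ≤ |exp (t • A) i j - c| + |c - z j| := abs_sub_le _ _ _
      _ ≤ 2 * r ^ ⌊t⌋₊ := by linarith [hc i, abs_sub_comm c (z j)]
  have hlim : Tendsto (fun t : ℝ => 2 * r ^ ⌊t⌋₊) atTop (nhds 0) := by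
    simpa using ((tendsto_pow_atTop_nhds_zero_of_lt_one hr0 hr1).comp
      tendsto_nat_floor_atTop).const_mul 2
  refine tendsto_pi_nhds.mpr fun i => tendsto_pi_nhds.mpr fun j => ?_
  rw [vecMulVec_apply, one_mul]
  refine tendsto_iff_dist_tendsto_zero.mpr (squeeze_zero' (.of_forall fun t => dist_nonneg) ?_ hlim)
  filter_upwards [eventually_ge_atTop 0] with t ht
  exact (Real.dist_eq _ _).trans_le (hbound t ht i j)
end

section
/- Let A ∈ ℝ^{n×n} be an irreducible rate matrix with positive left null vector z (z > 0 entrywise, z^T A = 0, 1^T z = 1), and let W = 1·z^T be the spectral projector. Let v ∈ ℝ^n and let θ : ℝ → ℝ^n be differentiable with θ'(t) = A·θ(t) + v for all t ≥ 0. Then for any initial condition θ(0), lim_{t→∞} A·θ(t) = (W − I)·v. -/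
open Matrix Filter

/-!
Set `u t = A θ(t) - (W - I) v`. Since `A 1 = 0` and `zᵀ A = 0`, `u' = A u` and `zᵀ u ≡ 0`.
For `V(x) = ∑ zᵢ xᵢ²` one has `d/dt V(u) = 2 ∑ zᵢ uᵢ (A u)ᵢ = -∑ᵢⱼ zᵢ Aᵢⱼ (uᵢ - uⱼ)²`, which is
`≤ 0` because `A` is Metzler, and vanishes only on vectors constant along the edges of `A`,
i.e. (by irreducibility) on constant vectors, i.e. (since `zᵀ u = 0`) only at `u = 0`.
Compactness of the unit sphere of the hyperplane `zᵀ x = 0` upgrades this to `V' ≤ -c V`,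
so `V(u(t)) → 0` exponentially and `u → 0`.
-/

open Finset

section

variable {ι : Type*} [Fintype ι]

def weightedQuadForm (z : ι → ℝ) (A : Matrix ι ι ℝ) (x : ι → ℝ) : ℝ :=
  ∑ i, z i * x i * (A *ᵥ x) i

theorem weightedQuadForm_eq_neg_half_sum {z : ι → ℝ} {A : Matrix ι ι ℝ}
    (hrow : A *ᵥ (fun _ => (1 : ℝ)) = 0) (hz : z ᵥ* A = 0) (x : ι → ℝ) :
    weightedQuadForm z A x = -(1 / 2) * ∑ i, ∑ j, z i * A i j * (x i - x j) ^ 2 := by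
  have hrow' : ∀ i, ∑ j, A i j = 0 := fun i => by
    simpa [mulVec, dotProduct] using congrFun hrow i
  have hcol : ∀ j, ∑ i, z i * A i j = 0 := fun j => by
    simpa [vecMul, dotProduct] using congrFun hz j
  have hexpand : ∑ i, ∑ j, z i * A i j * (x i - x j) ^ 2 =
      ∑ i, z i * x i ^ 2 * ∑ j, A i j + ∑ j, x j ^ 2 * ∑ i, z i * A i j
        - 2 * weightedQuadForm z A x := by
    simp only [weightedQuadForm, mulVec, dotProduct, mul_sum]
    rw [sum_comm (f := fun j i => x j ^ 2 * (z i * A i j)), ← sum_add_distrib,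
      ← sum_sub_distrib]
    refine sum_congr rfl fun i _ => ?_
    rw [← sum_add_distrib, ← sum_sub_distrib]
    exact sum_congr rfl fun j _ => by ring
  simp only [hexpand, hrow', hcol, mul_zero, sum_const_zero]
  ring

theorem weightedQuadForm_smul (z : ι → ℝ) (A : Matrix ι ι ℝ) (r : ℝ) (x : ι → ℝ) :
    weightedQuadForm z A (r • x) = r ^ 2 * weightedQuadForm z A x := by
  simp only [weightedQuadForm, mulVec_smul, Pi.smul_apply, smul_eq_mul, mul_sum]
  exact sum_congr rfl fun i _ => by ring

theorem continuous_weightedQuadForm (z : ι → ℝ) (A : Matrix ι ι ℝ) :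
    Continuous (weightedQuadForm z A) := by
  unfold weightedQuadForm
  fun_prop

def weightedSqNorm (z x : ι → ℝ) : ℝ := ∑ i, z i * x i ^ 2

theorem weightedSqNorm_nonneg {z : ι → ℝ} (hz : ∀ i, 0 ≤ z i) (x : ι → ℝ) :
    0 ≤ weightedSqNorm z x :=
  sum_nonneg fun i _ => mul_nonneg (hz i) (sq_nonneg _)

theorem weightedSqNorm_le {z : ι → ℝ} (hz : ∀ i, 0 ≤ z i) (x : ι → ℝ) :
    weightedSqNorm z x ≤ (∑ i, z i) * ‖x‖ ^ 2 := by
  rw [weightedSqNorm, sum_mul]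
  refine sum_le_sum fun i _ => mul_le_mul_of_nonneg_left ?_ (hz i)
  simpa [sq_abs] using pow_le_pow_left₀ (norm_nonneg _) (norm_le_pi_norm x i) 2

theorem hasDerivAt_weightedSqNorm (z : ι → ℝ) {u : ℝ → ι → ℝ} {u' : ι → ℝ} {t : ℝ}
    (hu : HasDerivAt u u' t) :
    HasDerivAt (fun s => weightedSqNorm z (u s)) (2 * ∑ i, z i * u t i * u' i) t := by
  refine (HasDerivAt.fun_sum fun i _ =>
    ((hasDerivAt_pi.1 hu i).fun_pow 2).const_mul (z i)).congr_deriv ?_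
  rw [mul_sum]
  refine sum_congr rfl fun i _ => ?_
  norm_num
  ring

theorem tendsto_zero_of_weightedSqNorm {α : Type*} {l : Filter α} {z : ι → ℝ}
    (hz : ∀ i, 0 < z i) {f : α → ι → ℝ}
    (hf : Tendsto (fun a => weightedSqNorm z (f a)) l (nhds 0)) : Tendsto f l (nhds 0) := by
  refine tendsto_pi_nhds.2 fun i => ?_
  have hzi : Tendsto (fun a => z i * f a i ^ 2) l (nhds 0) :=
    tendsto_of_tendsto_of_tendsto_of_le_of_le' tendsto_const_nhds hf
      (Eventually.of_forall fun a => mul_nonneg (hz i).le (sq_nonneg _))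
      (Eventually.of_forall fun a => single_le_sum (f := fun j => z j * f a j ^ 2)
        (fun j _ => mul_nonneg (hz j).le (sq_nonneg _)) (mem_univ i))
  have hsq : Tendsto (fun a => f a i ^ 2) l (nhds 0) := by
    simpa [← mul_assoc, inv_mul_cancel₀ (hz i).ne'] using hzi.const_mul (z i)⁻¹
  have habs : Tendsto (fun a => |f a i|) l (nhds 0) := by
    simpa [Function.comp_def, Real.sqrt_sq_eq_abs] using
      (Real.continuous_sqrt.tendsto 0).comp hsq
  exact (tendsto_zero_iff_abs_tendsto_zero _).2 habs

end

theorem IsIrreducibleMatrix.eq_of_forall_adj {n : ℕ} {A : Matrix (Fin n) (Fin n) ℝ}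
    (hirr : IsIrreducibleMatrix A) {x : Fin n → ℝ}
    (hx : ∀ i j, i ≠ j → A i j ≠ 0 → x i = x j) (i j : Fin n) : x i = x j := by
  have hpath : ∀ {a b}, Relation.TransGen (fun a b => a ≠ b ∧ A a b ≠ 0) a b → x a = x b := by
    intro a b h
    induction h with
    | single h => exact hx _ _ h.1 h.2
    | tail _ h ih => exact ih.trans (hx _ _ h.1 h.2)
  rcases eq_or_ne i j with rfl | hij
  · rfl
  · exact hpath (hirr i j hij)

theorem weightedQuadForm_lt_zero {n : ℕ} {A : Matrix (Fin n) (Fin n) ℝ}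
    (hrate : IsRateMatrix A) (hirr : IsIrreducibleMatrix A) {z : Fin n → ℝ}
    (hz_pos : ∀ i, 0 < z i) (hz_left : z ᵥ* A = 0) {x : Fin n → ℝ}
    (hzx : z ⬝ᵥ x = 0) (hx : x ≠ 0) : weightedQuadForm z A x < 0 := by
  have hterm : ∀ i j, 0 ≤ z i * A i j * (x i - x j) ^ 2 := fun i j => by
    rcases eq_or_ne i j with rfl | hij
    · simp
    · exact mul_nonneg (mul_nonneg (hz_pos i).le (hrate.1 i j hij)) (sq_nonneg _)
  rw [weightedQuadForm_eq_neg_half_sum hrate.2 hz_left]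
  suffices 0 < ∑ i, ∑ j, z i * A i j * (x i - x j) ^ 2 by linarith
  refine (sum_nonneg fun i _ => sum_nonneg fun j _ => hterm i j).lt_of_ne' fun hsum => hx ?_
  have hadj : ∀ i j, i ≠ j → A i j ≠ 0 → x i = x j := fun i j _ hA => by
    have hi := (sum_eq_zero_iff_of_nonneg fun i _ => sum_nonneg fun j _ => hterm i j).1
      hsum i (mem_univ i)
    have hij := (sum_eq_zero_iff_of_nonneg fun j _ => hterm i j).1 hi j (mem_univ j)
    simpa [(hz_pos i).ne', hA, sub_eq_zero] using hij
  obtain ⟨i₀⟩ : Nonempty (Fin n) := by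
    by_contra h
    exact hx (funext fun i => (h ⟨i⟩).elim)
  have hconst : x = fun _ => x i₀ := funext fun i => hirr.eq_of_forall_adj hadj i i₀
  have hzsum : 0 < ∑ i, z i := sum_pos (fun i _ => hz_pos i) ⟨i₀, mem_univ i₀⟩
  rw [hconst] at hzx
  have hxi₀ : x i₀ = 0 := by
    have : (∑ i, z i) * x i₀ = 0 := by simpa [dotProduct, ← sum_mul] using hzx
    exact (mul_eq_zero.1 this).resolve_left hzsum.ne'
  rw [hconst, hxi₀]
  rfl

theorem exists_pos_le_neg_mul_norm_sq_of_neg {E : Type*} [NormedAddCommGroup E]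
    [NormedSpace ℝ E] [FiniteDimensional ℝ E] (S : Submodule ℝ E) {Q : E → ℝ}
    (hQ : Continuous Q) (hhom : ∀ (r : ℝ) (x : E), Q (r • x) = r ^ 2 * Q x)
    (hneg : ∀ x ∈ S, x ≠ 0 → Q x < 0) :
    ∃ c > 0, ∀ x ∈ S, Q x ≤ -c * ‖x‖ ^ 2 := by
  have : ProperSpace E := FiniteDimensional.proper_real E
  set K : Set E := S ∩ Metric.sphere 0 1
  have hK : IsCompact K := (isCompact_sphere 0 1).inter_left S.closed_of_finiteDimensional
  obtain ⟨c, hc, hcK⟩ : ∃ c > 0, ∀ y ∈ K, Q y ≤ -c := by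
    rcases K.eq_empty_or_nonempty with hKe | hKne
    · exact ⟨1, one_pos, by simp [hKe]⟩
    · obtain ⟨y₀, hy₀, hmax⟩ := hK.exists_isMaxOn hKne hQ.continuousOn
      have hy₀0 : y₀ ≠ 0 := ne_zero_of_mem_unit_sphere ⟨y₀, hy₀.2⟩
      exact ⟨-Q y₀, neg_pos.2 (hneg y₀ hy₀.1 hy₀0), fun y hy => by simpa using hmax hy⟩
  refine ⟨c, hc, fun x hx => ?_⟩
  rcases eq_or_ne x 0 with rfl | hx0
  · simp [(by simpa using hhom 0 0 : Q 0 = 0)]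
  · have hxK : ‖x‖⁻¹ • x ∈ K := ⟨S.smul_mem _ hx, by simp [norm_smul, hx0]⟩
    calc Q x = ‖x‖ ^ 2 * Q (‖x‖⁻¹ • x) := by
          rw [← hhom, smul_inv_smul₀ (norm_ne_zero_iff.2 hx0)]
      _ ≤ ‖x‖ ^ 2 * -c := mul_le_mul_of_nonneg_left (hcK _ hxK) (by positivity)
      _ = -c * ‖x‖ ^ 2 := by ring

theorem le_mul_exp_of_hasDerivAt_le_neg_mul {V V' : ℝ → ℝ} {c : ℝ}
    (hV : ∀ t, 0 ≤ t → HasDerivAt V (V' t) t) (hle : ∀ t, 0 ≤ t → V' t ≤ -c * V t)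
    {t : ℝ} (ht : 0 ≤ t) : V t ≤ V 0 * Real.exp (-c * t) := by
  have hg : ∀ s, 0 ≤ s → HasDerivAt (fun s => V s * Real.exp (c * s))
      (V' s * Real.exp (c * s) + V s * (Real.exp (c * s) * c)) s := fun s hs => by
    simpa using (hV s hs).fun_mul ((hasDerivAt_id s).const_mul c).exp
  have hanti : AntitoneOn (fun s => V s * Real.exp (c * s)) (Set.Ici 0) := by
    refine antitoneOn_of_hasDerivWithinAt_nonpos (convex_Ici 0)
      (fun s hs => (hg s hs).continuousAt.continuousWithinAt)
      (fun s hs => (hg s (interior_subset hs)).hasDerivWithinAt) fun s hs => ?_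
    have := hle s (interior_subset hs)
    have := Real.exp_pos (c * s)
    nlinarith
  have := hanti Set.self_mem_Ici ht ht
  simp only [mul_zero, Real.exp_zero, mul_one] at this
  calc V t = V t * Real.exp (c * t) * Real.exp (-c * t) := by
        rw [mul_assoc, ← Real.exp_add, show c * t + -c * t = 0 by ring, Real.exp_zero, mul_one]
    _ ≤ V 0 * Real.exp (-c * t) := by gcongr

theorem tendsto_zero_of_hasDerivAt_le_neg_mul {V V' : ℝ → ℝ} {c : ℝ} (hc : 0 < c)
    (hV : ∀ t, 0 ≤ t → HasDerivAt V (V' t) t) (hle : ∀ t, 0 ≤ t → V' t ≤ -c * V t)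
    (hV0 : ∀ t, 0 ≤ V t) : Tendsto V atTop (nhds 0) := by
  have hexp : Tendsto (fun t => V 0 * Real.exp (-c * t)) atTop (nhds 0) := by
    simpa using (Real.tendsto_exp_atBot.comp
      (tendsto_id.const_mul_atTop_of_neg (neg_neg_of_pos hc))).const_mul (V 0)
  refine tendsto_of_tendsto_of_tendsto_of_le_of_le' tendsto_const_nhds hexp
    (Eventually.of_forall hV0) ?_
  filter_upwards [eventually_ge_atTop 0] with t ht
  exact le_mul_exp_of_hasDerivAt_le_neg_mul hV hle ht

theorem IsRateMatrix.mulVec_const {n : ℕ} {A : Matrix (Fin n) (Fin n) ℝ}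
    (hrate : IsRateMatrix A) (c : ℝ) : A *ᵥ (fun _ => c) = 0 := by
  rw [show (fun _ => c) = c • (fun _ => (1 : ℝ)) by ext; simp, mulVec_smul, hrate.2, smul_zero]

theorem tendsto_zero_of_hasDerivAt_mulVec {n : ℕ} {A : Matrix (Fin n) (Fin n) ℝ}
    (hrate : IsRateMatrix A) (hirr : IsIrreducibleMatrix A) {z : Fin n → ℝ}
    (hz_pos : ∀ i, 0 < z i) (hz_left : z ᵥ* A = 0) (hz_sum : ∑ i, z i = 1)
    {u : ℝ → Fin n → ℝ} (hu : ∀ t, 0 ≤ t → HasDerivAt u (A *ᵥ u t) t)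
    (hzu : ∀ t, z ⬝ᵥ u t = 0) : Tendsto u atTop (nhds 0) := by
  obtain ⟨c, hc, hQ⟩ := exists_pos_le_neg_mul_norm_sq_of_neg
    (LinearMap.ker (dotProductEquiv ℝ (Fin n) z)) (continuous_weightedQuadForm z A)
    (weightedQuadForm_smul z A) fun x hx hx0 =>
      weightedQuadForm_lt_zero hrate hirr hz_pos hz_left (by simpa using hx) hx0
  have hV_le : ∀ t, 2 * weightedQuadForm z A (u t) ≤ -(2 * c) * weightedSqNorm z (u t) :=
    fun t => by
      have hQu := hQ (u t) (by simpa using hzu t)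
      have hVu := weightedSqNorm_le (fun i => (hz_pos i).le) (u t)
      rw [hz_sum, one_mul] at hVu
      nlinarith
  exact tendsto_zero_of_weightedSqNorm hz_pos <|
    tendsto_zero_of_hasDerivAt_le_neg_mul (by positivity)
      (fun t ht => hasDerivAt_weightedSqNorm z (hu t ht)) (fun t _ => hV_le t)
      (fun t => weightedSqNorm_nonneg (fun i => (hz_pos i).le) (u t))

/-- Let `A` be an irreducible rate matrix with positive left null vector `z`
(`z > 0` entrywise, `zᵀ A = 0`, `1ᵀ z = 1`) and spectral projector `W = 1·zᵀ`.
If `θ` is differentiable with `θ'(t) = A θ(t) + v` for all `t ≥ 0`, then for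
any initial condition `θ(0)`, `A θ(t) → (W - I) v` as `t → ∞`. -/
theorem Atheta_tendsto {n : ℕ} (A : Matrix (Fin n) (Fin n) ℝ)
    (hrate : IsRateMatrix A) (hirr : IsIrreducibleMatrix A)
    (z : Fin n → ℝ) (hz_pos : ∀ i, 0 < z i)
    (hz_left : z ᵥ* A = 0) (hz_sum : ∑ i, z i = 1)
    (W : Matrix (Fin n) (Fin n) ℝ) (hW : W = vecMulVec (fun _ => (1 : ℝ)) z)
    (v : Fin n → ℝ) (θ : ℝ → Fin n → ℝ)
    (hθ : ∀ t : ℝ, 0 ≤ t → HasDerivAt θ (A *ᵥ θ t + v) t) :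
    Tendsto (fun t : ℝ => A *ᵥ θ t) atTop (nhds ((W - 1) *ᵥ v)) := by
  have hWv : W *ᵥ v = fun _ => z ⬝ᵥ v := by
    rw [hW]; ext i; simp [vecMulVec, mulVec, dotProduct]
  set u : ℝ → Fin n → ℝ := fun t => A *ᵥ θ t - (W - 1) *ᵥ v
  have hu : ∀ t, 0 ≤ t → HasDerivAt u (A *ᵥ u t) t := fun t ht => by
    have hAθ : HasDerivAt (fun s => A *ᵥ θ s) (A *ᵥ (A *ᵥ θ t + v)) t :=
      (mulVecLin A).toContinuousLinearMap.hasFDerivAt.comp_hasDerivAt t (hθ t ht)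
    refine (hAθ.sub_const _).congr_deriv ?_
    rw [mulVec_add, mulVec_sub, sub_mulVec, mulVec_sub, one_mulVec, hWv, hrate.mulVec_const,
      zero_sub, sub_neg_eq_add]
  have hzu : ∀ t, z ⬝ᵥ u t = 0 := fun t => by
    rw [dotProduct_sub, dotProduct_mulVec, hz_left, zero_dotProduct, sub_mulVec, one_mulVec, hWv,
      dotProduct_sub]
    simp [dotProduct, ← sum_mul, hz_sum]
  exact tendsto_sub_nhds_zero_iff.1
    (tendsto_zero_of_hasDerivAt_mulVec hrate hirr hz_pos hz_left hz_sum hu hzu)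
end

section
/- Consider the closed-loop bittide dynamics θ'(t) = A·θ(t) + ω^u + q + r with correction c(t) = A·θ(t) + q + r, where A is an irreducible rate matrix with positive left null vector z (z > 0 entrywise, z^T A = 0, 1^T z = 1) and spectral projector W = 1·z^T. Then for any initial condition θ(0) and any q ∈ ℝ^n, lim_{t→∞} c(t) = (W − I)·ω^u + W·(q + r). -/
open Matrix Filter

/-!
Subtracting the claimed limit from `c` leaves `u(t) = A θ(t) + ωᵘ + q + r - (z ⬝ (ωᵘ + q + r)) 𝟙`,
which solves `u' = A u` and lies in the hyperplane `z ⬝ u = 0`. Because `zᵀ A = 0` and `A 𝟙 = 0`,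
the energy `V = ∑ zᵢ uᵢ²` satisfies `V' = -∑ zᵢ Aᵢⱼ (uⱼ - uᵢ)²`. For a Metzler matrix this Dirichlet
form vanishes only on vectors that are constant along the edges of `A`; by irreducibility these
are the constant vectors, which meet the hyperplane only in `0`. By compactness of the unit sphere
the form therefore dominates `κ ‖u‖² ≥ κ V` on the hyperplane, so `V` decays like `exp (-κ t)`.
-/

open Real Topology

theorem exists_pos_mul_sq_norm_le {E : Type*} [NormedAddCommGroup E] [NormedSpace ℝ E]
    [ProperSpace E] {K : Set E} (hK : IsClosed K) (hK_smul : ∀ (c : ℝ), ∀ u ∈ K, c • u ∈ K)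
    {f : E → ℝ} (hf : Continuous f) (hf_smul : ∀ (c : ℝ) (u : E), f (c • u) = c ^ 2 * f u)
    (hf_pos : ∀ u ∈ K, u ≠ 0 → 0 < f u) :
    ∃ κ > 0, ∀ u ∈ K, κ * ‖u‖ ^ 2 ≤ f u := by
  have hf_zero : f 0 = 0 := by simpa using hf_smul 0 0
  have hnormalize : ∀ u ∈ K, u ≠ 0 → ‖u‖⁻¹ • u ∈ K ∩ Metric.sphere 0 1 := fun u hu hu0 =>
    ⟨hK_smul _ u hu, by simp [norm_smul, hu0]⟩
  rcases (K ∩ Metric.sphere (0 : E) 1).eq_empty_or_nonempty with hS | hS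
  · refine ⟨1, one_pos, fun u hu => ?_⟩
    obtain rfl : u = 0 := by
      by_contra hu0
      simpa [hS] using hnormalize u hu hu0
    simp [hf_zero]
  obtain ⟨u₀, ⟨hu₀K, hu₀S⟩, hmin⟩ :=
    (isCompact_sphere (0 : E) 1).inter_left hK |>.exists_isMinOn hS hf.continuousOn
  refine ⟨f u₀, hf_pos u₀ hu₀K (ne_zero_of_mem_unit_sphere ⟨u₀, hu₀S⟩), fun u hu => ?_⟩
  rcases eq_or_ne u 0 with rfl | hu0
  · simp [hf_zero]
  calc f u₀ * ‖u‖ ^ 2 ≤ f (‖u‖⁻¹ • u) * ‖u‖ ^ 2 :=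
        mul_le_mul_of_nonneg_right (hmin (hnormalize u hu hu0)) (sq_nonneg _)
    _ = f u := by
        rw [hf_smul]
        field_simp

theorem le_mul_exp_of_hasDerivAt_le {V V' : ℝ → ℝ} {κ : ℝ}
    (hV : ∀ t, 0 ≤ t → HasDerivAt V (V' t) t) (hV' : ∀ t, 0 ≤ t → V' t ≤ -κ * V t)
    {t : ℝ} (ht : 0 ≤ t) : V t ≤ V 0 * exp (-κ * t) := by
  have hanti : AntitoneOn (fun s => exp (κ * s) * V s) (Set.Ici 0) := by
    refine antitoneOn_of_hasDerivWithinAt_nonpos (f' := fun s => exp (κ * s) * (κ * V s + V' s))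
      (convex_Ici 0) (fun s hs => ((continuous_exp.comp (continuous_const_mul κ)).continuousAt.mul
        (hV s hs).continuousAt).continuousWithinAt)
      (fun s hs => ?_) (fun s hs => ?_)
    · exact ((((hasDerivAt_id' s).const_mul κ).exp.fun_mul
        (hV s (interior_subset hs))).congr_deriv (by ring)).hasDerivWithinAt
    · have := hV' s (interior_subset hs)
      exact mul_nonpos_of_nonneg_of_nonpos (exp_pos _).le (by linarith)
  have := hanti Set.self_mem_Ici ht ht
  simp only [mul_zero, exp_zero, one_mul] at this
  rw [neg_mul, Real.exp_neg, ← div_eq_mul_inv, le_div_iff₀ (exp_pos _), mul_comm]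
  exact this

theorem hasDerivAt_mulVec {ι : Type*} [Fintype ι] (A : Matrix ι ι ℝ) {u : ℝ → ι → ℝ}
    {u' : ι → ℝ} {t : ℝ} (hu : HasDerivAt u u' t) :
    HasDerivAt (fun s => A *ᵥ u s) (A *ᵥ u') t :=
  (mulVecLin A).toContinuousLinearMap.hasFDerivAt.comp_hasDerivAt t hu

theorem hasDerivAt_sum_mul_sq {ι : Type*} [Fintype ι] (z : ι → ℝ) {u : ℝ → ι → ℝ}
    {u' : ι → ℝ} {t : ℝ} (hu : HasDerivAt u u' t) :
    HasDerivAt (fun s => ∑ i, z i * u s i ^ 2) (2 * ∑ i, z i * u t i * u' i) t := by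
  rw [Finset.mul_sum]
  refine HasDerivAt.fun_sum fun i _ => ?_
  exact (((hasDerivAt_pi.1 hu i).fun_pow 2).const_mul (z i)).congr_deriv (by push_cast; ring)

theorem sum_mul_sq_le_sq_norm {ι : Type*} [Fintype ι] {z : ι → ℝ} (hz : ∀ i, 0 ≤ z i)
    (hz_sum : ∑ i, z i = 1) (u : ι → ℝ) : ∑ i, z i * u i ^ 2 ≤ ‖u‖ ^ 2 :=
  calc ∑ i, z i * u i ^ 2 ≤ ∑ i, z i * ‖u‖ ^ 2 := by
        refine Finset.sum_le_sum fun i _ => mul_le_mul_of_nonneg_left ?_ (hz i)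
        simpa [Real.norm_eq_abs, sq_abs] using
          pow_le_pow_left₀ (norm_nonneg _) (norm_le_pi_norm u i) 2
    _ = ‖u‖ ^ 2 := by rw [← Finset.sum_mul, hz_sum, one_mul]

def dirichletForm {ι : Type*} [Fintype ι] (A : Matrix ι ι ℝ) (z u : ι → ℝ) : ℝ :=
  ∑ i, ∑ j, z i * A i j * (u j - u i) ^ 2

theorem dirichletForm_smul {ι : Type*} [Fintype ι] (A : Matrix ι ι ℝ) (z : ι → ℝ) (c : ℝ)
    (u : ι → ℝ) : dirichletForm A z (c • u) = c ^ 2 * dirichletForm A z u := by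
  simp only [dirichletForm, Finset.mul_sum, Pi.smul_apply, smul_eq_mul]
  exact Finset.sum_congr rfl fun i _ => Finset.sum_congr rfl fun j _ => by ring

theorem two_mul_sum_mul_mulVec_eq_neg_dirichletForm {ι : Type*} [Fintype ι]
    {A : Matrix ι ι ℝ} {z : ι → ℝ} (hA : A *ᵥ (fun _ => (1 : ℝ)) = 0) (hzA : z ᵥ* A = 0)
    (u : ι → ℝ) : 2 * ∑ i, z i * u i * (A *ᵥ u) i = -dirichletForm A z u := by
  have hcol : ∀ j, ∑ i, z i * A i j = 0 := fun j => by
    simpa [vecMul, dotProduct] using congrFun hzA j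
  have hrow : ∀ i, ∑ j, A i j = 0 := fun i => by
    simpa [mulVec, dotProduct] using congrFun hA i
  have hexpand : dirichletForm A z u = ∑ j, (∑ i, z i * A i j) * u j ^ 2
      - 2 * ∑ i, z i * u i * (A *ᵥ u) i + ∑ i, z i * u i ^ 2 * ∑ j, A i j := by
    simp only [dirichletForm, mulVec, dotProduct, Finset.mul_sum, Finset.sum_mul]
    rw [Finset.sum_comm (f := fun j i => z i * A i j * u j ^ 2), ← Finset.sum_sub_distrib,
      ← Finset.sum_add_distrib]
    refine Finset.sum_congr rfl fun i _ => ?_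
    rw [← Finset.sum_sub_distrib, ← Finset.sum_add_distrib]
    refine Finset.sum_congr rfl fun j _ => ?_
    ring
  simp [hexpand, hcol, hrow]

section Metzler

variable {n : ℕ} {A : Matrix (Fin n) (Fin n) ℝ} {z : Fin n → ℝ}

theorem IsIrreducibleMatrix.apply_eq_apply {α : Type*} (hirr : IsIrreducibleMatrix A)
    {u : Fin n → α} (hu : ∀ i j, i ≠ j → A i j ≠ 0 → u i = u j) (i j : Fin n) : u i = u j := by
  rcases eq_or_ne i j with rfl | hij
  · rfl
  obtain hpath := hirr i j hij
  clear hij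
  induction hpath with
  | single hedge => exact hu _ _ hedge.1 hedge.2
  | tail _ hedge ih => exact ih.trans (hu _ _ hedge.1 hedge.2)

theorem IsMetzler.mul_mul_sq_sub_nonneg (hA : IsMetzler A) (hz : ∀ i, 0 ≤ z i)
    (u : Fin n → ℝ) (i j : Fin n) : 0 ≤ z i * A i j * (u j - u i) ^ 2 := by
  rcases eq_or_ne i j with rfl | hij
  · simp
  · exact mul_nonneg (mul_nonneg (hz i) (hA i j hij)) (sq_nonneg _)

theorem dirichletForm_nonneg (hA : IsMetzler A) (hz : ∀ i, 0 ≤ z i) (u : Fin n → ℝ) :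
    0 ≤ dirichletForm A z u :=
  Finset.sum_nonneg fun i _ => Finset.sum_nonneg fun j _ => hA.mul_mul_sq_sub_nonneg hz u i j

theorem dirichletForm_pos (hA : IsMetzler A) (hirr : IsIrreducibleMatrix A)
    (hz : ∀ i, 0 < z i) (hz_sum : ∑ i, z i = 1) {u : Fin n → ℝ} (hzu : z ⬝ᵥ u = 0)
    (hu : u ≠ 0) : 0 < dirichletForm A z u := by
  have hz₀ : ∀ i, 0 ≤ z i := fun i => (hz i).le
  refine (dirichletForm_nonneg hA hz₀ u).lt_of_ne fun hzero => hu ?_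
  have hterm : ∀ i j, z i * A i j * (u j - u i) ^ 2 = 0 := fun i j => by
    rw [dirichletForm, eq_comm, Finset.sum_eq_zero_iff_of_nonneg fun i _ =>
      Finset.sum_nonneg fun j _ => hA.mul_mul_sq_sub_nonneg hz₀ u i j] at hzero
    exact (Finset.sum_eq_zero_iff_of_nonneg fun j _ => hA.mul_mul_sq_sub_nonneg hz₀ u i j).1
      (hzero i (Finset.mem_univ i)) j (Finset.mem_univ j)
  have hconst : ∀ i j, u i = u j := hirr.apply_eq_apply fun i j _ hAij => by
    simpa [(hz i).ne', hAij, sub_eq_zero, eq_comm] using hterm i j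
  ext i
  calc u i = ∑ j, z j * u i := by rw [← Finset.sum_mul, hz_sum, one_mul]
    _ = z ⬝ᵥ u := Finset.sum_congr rfl fun j _ => by rw [hconst i j]
    _ = 0 := hzu

theorem exists_pos_mul_sq_norm_le_dirichletForm (hA : IsMetzler A)
    (hirr : IsIrreducibleMatrix A) (hz : ∀ i, 0 < z i) (hz_sum : ∑ i, z i = 1) :
    ∃ κ > 0, ∀ u, z ⬝ᵥ u = 0 → κ * ‖u‖ ^ 2 ≤ dirichletForm A z u :=
  exists_pos_mul_sq_norm_le (K := {u | z ⬝ᵥ u = 0})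
    (isClosed_eq (continuous_const.dotProduct continuous_id) continuous_const)
    (fun c u hu => by simp_all [dotProduct_smul])
    (by unfold dirichletForm; fun_prop) (dirichletForm_smul A z)
    (fun _ hu hu0 => dirichletForm_pos hA hirr hz hz_sum hu hu0)

end Metzler

theorem tendsto_nhds_zero_of_hasDerivAt_mulVec {n : ℕ} {A : Matrix (Fin n) (Fin n) ℝ}
    (hrate : IsRateMatrix A) (hirr : IsIrreducibleMatrix A) {z : Fin n → ℝ}
    (hz : ∀ i, 0 < z i) (hzA : z ᵥ* A = 0) (hz_sum : ∑ i, z i = 1) {u : ℝ → Fin n → ℝ}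
    (hu : ∀ t, 0 ≤ t → HasDerivAt u (A *ᵥ u t) t) (hzu : ∀ t, 0 ≤ t → z ⬝ᵥ u t = 0) :
    Tendsto u atTop (𝓝 0) := by
  obtain ⟨κ, hκ, hcoercive⟩ :=
    exists_pos_mul_sq_norm_le_dirichletForm hrate.1 hirr hz hz_sum
  set V : ℝ → ℝ := fun t => ∑ i, z i * u t i ^ 2
  have hV_nonneg : ∀ t, 0 ≤ V t := fun t =>
    Finset.sum_nonneg fun i _ => mul_nonneg (hz i).le (sq_nonneg _)
  have hV_decay : ∀ t, 0 ≤ t → V t ≤ V 0 * exp (-κ * t) := fun t =>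
    le_mul_exp_of_hasDerivAt_le (fun s hs => hasDerivAt_sum_mul_sq z (hu s hs)) fun s hs => by
      rw [two_mul_sum_mul_mulVec_eq_neg_dirichletForm hrate.2 hzA]
      have := hcoercive (u s) (hzu s hs)
      have := sum_mul_sq_le_sq_norm (fun i => (hz i).le) hz_sum (u s)
      nlinarith
  have hV_tendsto : Tendsto V atTop (𝓝 0) := by
    refine squeeze_zero' (.of_forall hV_nonneg) ((eventually_ge_atTop 0).mono hV_decay) ?_
    simpa [neg_mul] using
      (tendsto_exp_neg_atTop_nhds_zero.comp (tendsto_id.const_mul_atTop hκ)).const_mul (V 0)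
  refine tendsto_pi_nhds.2 fun i => squeeze_zero_norm (a := fun t => √(V t / z i)) (fun t => ?_)
    (by simpa using (hV_tendsto.div_const (z i)).sqrt)
  refine Real.abs_le_sqrt ((le_div_iff₀' (hz i)).2 ?_)
  exact Finset.single_le_sum (f := fun j => z j * u t j ^ 2)
    (fun j _ => mul_nonneg (hz j).le (sq_nonneg _)) (Finset.mem_univ i)

/-- Closed-loop bittide dynamics `θ'(t) = A θ(t) + ωᵘ + q + r` with correction
`c(t) = A θ(t) + q + r`, where `A` is an irreducible rate matrix with positive
left null vector `z` and spectral projector `W = 1·zᵀ`.  Then for any initial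
condition and any `q`, the correction converges:
`c(t) → (W - I) ωᵘ + W (q + r)` as `t → ∞`. -/
theorem correction_tendsto {n : ℕ} (A : Matrix (Fin n) (Fin n) ℝ)
    (hrate : IsRateMatrix A) (hirr : IsIrreducibleMatrix A)
    (z : Fin n → ℝ) (hz_pos : ∀ i, 0 < z i)
    (hz_left : z ᵥ* A = 0) (hz_sum : ∑ i, z i = 1)
    (W : Matrix (Fin n) (Fin n) ℝ) (hW : W = vecMulVec (fun _ => (1 : ℝ)) z)
    (ωu q r : Fin n → ℝ) (θ : ℝ → Fin n → ℝ)
    (hθ : ∀ t : ℝ, 0 ≤ t → HasDerivAt θ (A *ᵥ θ t + ωu + q + r) t)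
    (c : ℝ → Fin n → ℝ) (hc : ∀ t : ℝ, c t = A *ᵥ θ t + q + r) :
    Tendsto c atTop (nhds ((W - 1) *ᵥ ωu + W *ᵥ (q + r))) := by
  set μ := z ⬝ᵥ (ωu + q + r)
  have hW_mulVec : ∀ v : Fin n → ℝ, W *ᵥ v = fun _ => z ⬝ᵥ v := fun v => by
    ext
    simp [hW, vecMulVec_mulVec]
  have hlimit : (W - 1) *ᵥ ωu + W *ᵥ (q + r) = (fun _ => μ) - ωu := by
    ext i
    simp only [sub_mulVec, one_mulVec, hW_mulVec, Pi.add_apply, Pi.sub_apply, μ,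
      dotProduct_add]
    ring
  have hdeviation : ∀ t, c t - ((W - 1) *ᵥ ωu + W *ᵥ (q + r)) =
      A *ᵥ θ t + (ωu + q + r) - fun _ => μ := fun t => by
    rw [hc, hlimit]
    abel
  have hA_const : A *ᵥ (fun _ => μ) = 0 := by
    rw [show (fun _ => μ) = μ • fun _ : Fin n => (1 : ℝ) by ext; simp, mulVec_smul, hrate.2,
      smul_zero]
  rw [← tendsto_sub_nhds_zero_iff]
  refine tendsto_nhds_zero_of_hasDerivAt_mulVec hrate hirr hz_pos hz_left hz_sum
    (fun t ht => ?_) (fun t _ => ?_)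
  · simp only [hdeviation, mulVec_sub, hA_const, sub_zero]
    exact (((hasDerivAt_mulVec A (hθ t ht)).add_const _).sub_const _).congr_deriv
      (by simp only [add_assoc])
  · rw [hdeviation, dotProduct_sub, dotProduct_add, dotProduct_mulVec, hz_left, zero_dotProduct,
      zero_add, show z ⬝ᵥ (fun _ => μ) = μ by simp [dotProduct, ← Finset.sum_mul, hz_sum],
      sub_self]
end

section
/- Consider the reframed closed-loop bittide dynamics θ'(t) = A·θ(t) + ω^u + q* + r with A = k·D·B^T an irreducible rate matrix (k > 0), positive left null vector z (z > 0 entrywise, z^T A = 0, 1^T z = 1), spectral projector W = 1·z^T, and q* = (W − I)·ω^u + W·r. Suppose the offset is feasible with r = 0, i.e., β^off = B^T·θ⁰ + λ for some θ⁰ ∈ ℝ^n, and suppose the buffer occupancy β(t) = B^T·θ(t) + λ converges to a limit β^ss as t → ∞. Then β^ss = β^off; that is, the buffer occupancy converges to the buffer offset. -/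
/-!
With `r = 0` the forcing `ωᵘ + q* + r` is `W ωᵘ`, a constant vector, which `Bᵀ` annihilates;
hence `β' = Bᵀ A θ = k Bᵀ D (β - λ)`. Since `β` converges, so does `β'`, and its limit must
vanish: writing `βˢˢ - λ = Bᵀ v` (the range of `Bᵀ` is closed), `Bᵀ A v = 0`, so
`A² v = k D Bᵀ A v = 0`. By the maximum principle the kernel of an irreducible rate matrix
consists of the constant vectors, and a left null vector `z` with `∑ z ≠ 0` excludes a Jordan
block at `0`; so `A v = 0`, `v` is constant and `βˢˢ = λ`. The same argument applied to `θ⁰`,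
for which `A θ⁰ = -r = 0`, gives `βᵒᶠᶠ = λ`.
-/

open Matrix Filter

theorem eq_zero_of_tendsto_of_hasDerivAt {E : Type*} [NormedAddCommGroup E] [NormedSpace ℝ E]
    {f g : ℝ → E} {a L : E} (hf : ∀ᶠ t in atTop, HasDerivAt f (g t) t)
    (hfa : Tendsto f atTop (nhds a)) (hgL : Tendsto g atTop (nhds L)) : L = 0 := by
  have hstep : Tendsto (fun t => f (t + 1) - f t) atTop (nhds 0) := by
    simpa using (hfa.comp (tendsto_atTop_add_const_right atTop 1 tendsto_id)).sub hfa
  refine tendsto_nhds_unique (Metric.tendsto_nhds.2 fun ε hε => ?_) hstep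
  obtain ⟨T, hT⟩ := eventually_atTop.1 (hf.and (Metric.tendsto_nhds.1 hgL (ε / 2) (half_pos hε)))
  filter_upwards [eventually_ge_atTop T] with t ht
  -- mean value inequality for `s ↦ f s - s • L`, whose derivative stays within `ε / 2` of zero
  have hmvt := norm_image_sub_le_of_norm_deriv_le_segment' (f := fun s => f s - s • L)
    (f' := fun s => g s - L) (C := ε / 2)
    (fun s hs => by
      have hderiv := (hT s (ht.trans hs.1)).1.sub ((hasDerivAt_id' s).smul_const L)
      rw [one_smul] at hderiv
      exact hderiv.hasDerivWithinAt)
    (fun s hs => by simpa [dist_eq_norm] using (hT s (ht.trans hs.1)).2.le)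
    (t + 1) ⟨by linarith, le_rfl⟩
  calc dist (f (t + 1) - f t) L = ‖(f (t + 1) - (t + 1) • L) - (f t - t • L)‖ := by
        rw [dist_eq_norm, add_smul, one_smul]; congr 1; abel
    _ ≤ ε / 2 * (t + 1 - t) := hmvt
    _ < ε := by linarith

theorem HasDerivAt.const_mulVec {ι κ : Type*} [Fintype ι] [Fintype κ] {f : ℝ → κ → ℝ}
    {f' : κ → ℝ} {t : ℝ} (P : Matrix ι κ ℝ) (hf : HasDerivAt f f' t) :
    HasDerivAt (fun s => P *ᵥ f s) (P *ᵥ f') t :=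
  (P.mulVecLin.toContinuousLinearMap.hasFDerivAt (x := f t)).comp_hasDerivAt t hf

namespace IsRateMatrix

variable {n : ℕ} {A : Matrix (Fin n) (Fin n) ℝ}

theorem apply_eq_of_forall_apply_le (hA : IsRateMatrix A) {u : Fin n → ℝ} {i : Fin n}
    (hu : (A *ᵥ u) i = 0) (hmax : ∀ j, u j ≤ u i) {j : Fin n} (hij : A i j ≠ 0) : u j = u i := by
  have hsum : ∑ l, A i l * (u l - u i) = 0 := by
    have hrow := congrFun hA.2 i
    simp only [mulVec, dotProduct, mul_one, Pi.zero_apply] at hrow hu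
    simp only [mul_sub, Finset.sum_sub_distrib, ← Finset.sum_mul, hu, hrow, zero_mul, sub_zero]
  have hnonpos : ∀ l ∈ Finset.univ, A i l * (u l - u i) ≤ 0 := by
    intro l _
    rcases eq_or_ne l i with rfl | hl
    · simp
    · exact mul_nonpos_of_nonneg_of_nonpos (hA.1 i l hl.symm) (sub_nonpos.2 (hmax l))
  have hterm := (Finset.sum_eq_zero_iff_of_nonpos hnonpos).1 hsum j (Finset.mem_univ j)
  exact sub_eq_zero.1 ((mul_eq_zero.1 hterm).resolve_left hij)

theorem exists_eq_const_of_mulVec_eq_zero (hA : IsRateMatrix A) (hirr : IsIrreducibleMatrix A)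
    {u : Fin n → ℝ} (hu : A *ᵥ u = 0) : ∃ c, u = fun _ => c := by
  rcases isEmpty_or_nonempty (Fin n) with hn | hn
  · exact ⟨0, funext fun i => isEmptyElim i⟩
  obtain ⟨i₀, hmax⟩ := Finite.exists_max u
  have hreach : ∀ j, Relation.TransGen (fun a b => a ≠ b ∧ A a b ≠ 0) i₀ j → u j = u i₀ := by
    intro j hj
    induction hj with
    | single hab => exact hA.apply_eq_of_forall_apply_le (congrFun hu i₀) hmax hab.2
    | tail _ hbc ih =>
      exact (hA.apply_eq_of_forall_apply_le (congrFun hu _) (ih ▸ hmax) hbc.2).trans ih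
  refine ⟨u i₀, funext fun j => ?_⟩
  rcases eq_or_ne i₀ j with rfl | hj
  · rfl
  · exact hreach j (hirr i₀ j hj)

theorem mulVec_eq_zero_of_mulVec_mulVec_eq_zero (hA : IsRateMatrix A)
    (hirr : IsIrreducibleMatrix A) {z : Fin n → ℝ} (hz : z ᵥ* A = 0) (hz₁ : ∑ i, z i ≠ 0)
    {u : Fin n → ℝ} (hu : A *ᵥ (A *ᵥ u) = 0) : A *ᵥ u = 0 := by
  obtain ⟨c, hc⟩ := hA.exists_eq_const_of_mulVec_eq_zero hirr hu
  have hcz : c * ∑ i, z i = 0 :=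
    calc c * ∑ i, z i = z ⬝ᵥ (A *ᵥ u) := by
          simp only [hc, dotProduct, Finset.mul_sum, mul_comm]
      _ = 0 := by rw [dotProduct_mulVec, hz, zero_dotProduct]
  rw [hc, (mul_eq_zero.1 hcz).resolve_right hz₁]
  rfl

theorem right_factor_mulVec_eq_zero {ι : Type*} [Fintype ι] (hA : IsRateMatrix A)
    (hirr : IsIrreducibleMatrix A) {z : Fin n → ℝ} (hz : z ᵥ* A = 0) (hz₁ : ∑ i, z i ≠ 0)
    {M : Matrix (Fin n) ι ℝ} {P : Matrix ι (Fin n) ℝ} (hMP : A = M * P)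
    (hP : ∀ c, P *ᵥ (fun _ => c) = 0) {v : Fin n → ℝ} (hv : P *ᵥ (A *ᵥ v) = 0) :
    P *ᵥ v = 0 := by
  have hAAv : A *ᵥ (A *ᵥ v) = 0 := by
    rw [hMP, ← mulVec_mulVec, ← hMP, hv, mulVec_zero]
  obtain ⟨c, hc⟩ := hA.exists_eq_const_of_mulVec_eq_zero hirr
    (hA.mulVec_eq_zero_of_mulVec_mulVec_eq_zero hirr hz hz₁ hAAv)
  rw [hc, hP]

end IsRateMatrix

theorem incidence_transpose_mulVec_const_eq_zero {n m : ℕ} {src dst : Fin m → Fin n}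
    {S D B : Matrix (Fin n) (Fin m) ℝ} (hS : ∀ i e, S i e = if src e = i then 1 else 0)
    (hD : ∀ i e, D i e = if dst e = i then 1 else 0) (hB : B = S - D) (c : ℝ) :
    Bᵀ *ᵥ (fun _ => c) = 0 := by
  ext e
  simp [mulVec, dotProduct, hB, hS, hD, sub_mul, Finset.sum_sub_distrib]

theorem buffer_occupancy_tendsto_offset_general {n m : ℕ} (k : ℝ)
    (src dst : Fin m → Fin n)
    (S D B : Matrix (Fin n) (Fin m) ℝ)
    (hS : ∀ i e, S i e = if src e = i then 1 else 0)
    (hD : ∀ i e, D i e = if dst e = i then 1 else 0)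
    (hB : B = S - D)
    (A : Matrix (Fin n) (Fin n) ℝ) (hA : A = k • (D * Bᵀ))
    (hrate : IsRateMatrix A) (hirr : IsIrreducibleMatrix A)
    (z : Fin n → ℝ)
    (hz_left : z ᵥ* A = 0) (hz_sum : ∑ i, z i = 1)
    (W : Matrix (Fin n) (Fin n) ℝ) (hW : W = vecMulVec (fun _ => (1 : ℝ)) z)
    (lam βoff : Fin m → ℝ) (ωu : Fin n → ℝ)
    (r : Fin n → ℝ) (hr : r = k • (D *ᵥ (lam - βoff)))
    (θ0 : Fin n → ℝ) (hfeas : βoff = Bᵀ *ᵥ θ0 + lam)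
    (hr0 : r = 0)
    (qs : Fin n → ℝ) (hqs : qs = (W - 1) *ᵥ ωu + W *ᵥ r)
    (θ : ℝ → Fin n → ℝ)
    (hθ : ∀ t : ℝ, 0 ≤ t → HasDerivAt θ (A *ᵥ θ t + ωu + qs + r) t)
    (βss : Fin m → ℝ)
    (hconv : Tendsto (fun t : ℝ => Bᵀ *ᵥ θ t + lam) atTop (nhds βss)) :
    βss = βoff := by
  have hBc := incidence_transpose_mulVec_const_eq_zero hS hD hB
  have hAk : A = (k • D) * Bᵀ := by rw [hA, smul_mul]
  have hker : ∀ v, Bᵀ *ᵥ (A *ᵥ v) = 0 → Bᵀ *ᵥ v = 0 := fun v =>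
    hrate.right_factor_mulVec_eq_zero hirr hz_left (hz_sum ▸ one_ne_zero) hAk hBc
  have hoff : βoff = lam := by
    have hAθ0 : A *ᵥ θ0 = -r := by
      rw [hr, hfeas, add_comm, sub_add_cancel_left, mulVec_neg, smul_neg, neg_neg, hA,
        smul_mulVec, mulVec_mulVec]
    rw [hfeas, hker θ0 (by rw [hAθ0, hr0, neg_zero, mulVec_zero]), zero_add]
  have hforcing : ωu + qs + r = fun _ => z ⬝ᵥ ωu := by
    rw [hqs, hr0, hW, sub_mulVec, one_mulVec, vecMulVec_mulVec]
    ext i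
    simp
  have hβ' : ∀ᶠ t in atTop, HasDerivAt (fun t => Bᵀ *ᵥ θ t + lam) (Bᵀ *ᵥ (A *ᵥ θ t)) t := by
    filter_upwards [eventually_ge_atTop 0] with t ht
    have hderiv := ((hθ t ht).const_mulVec Bᵀ).add_const lam
    rwa [add_assoc, add_assoc, ← add_assoc ωu, hforcing, mulVec_add, hBc, add_zero] at hderiv
  have hBθ : Tendsto (fun t => Bᵀ *ᵥ θ t) atTop (nhds (βss - lam)) := by
    simpa using hconv.sub_const lam
  obtain ⟨v, hv⟩ : βss - lam ∈ LinearMap.range Bᵀ.mulVecLin :=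
    (Submodule.closed_of_finiteDimensional _).mem_of_tendsto hBθ
      (Eventually.of_forall fun t => ⟨θ t, rfl⟩)
  rw [mulVecLin_apply] at hv
  have hlim : Tendsto (fun t => Bᵀ *ᵥ (A *ᵥ θ t)) atTop (nhds (Bᵀ *ᵥ (A *ᵥ v))) := by
    simp only [hAk, ← mulVec_mulVec, hv]
    exact ((by fun_prop : Continuous fun x => Bᵀ *ᵥ ((k • D) *ᵥ x)).tendsto _).comp hBθ
  rw [hoff, ← sub_eq_zero, ← hv, hker v (eq_zero_of_tendsto_of_hasDerivAt hβ' hconv hlim)]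

/-- Reframed closed-loop bittide dynamics `θ'(t) = A θ(t) + ωᵘ + q* + r` with
`A = k·D·Bᵀ` an irreducible rate matrix (`k > 0`), positive left null vector
`z`, spectral projector `W = 1·zᵀ`, and `q* = (W - I)·ωᵘ + W·r` where
`r = k·D·(λ - βᵒᶠᶠ)`.  If the offset is feasible with `r = 0`
(`βᵒᶠᶠ = Bᵀ·θ⁰ + λ` for some `θ⁰`) and the buffer occupancy
`β(t) = Bᵀ·θ(t) + λ` converges to `βˢˢ`, then `βˢˢ = βᵒᶠᶠ`. -/
theorem buffer_occupancy_tendsto_offset {n m : ℕ} (k : ℝ) (hk : 0 < k)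
    (src dst : Fin m → Fin n) (hnoloop : ∀ e, src e ≠ dst e)
    (S D B : Matrix (Fin n) (Fin m) ℝ)
    (hS : ∀ i e, S i e = if src e = i then 1 else 0)
    (hD : ∀ i e, D i e = if dst e = i then 1 else 0)
    (hB : B = S - D)
    (A : Matrix (Fin n) (Fin n) ℝ) (hA : A = k • (D * Bᵀ))
    (hrate : IsRateMatrix A) (hirr : IsIrreducibleMatrix A)
    (z : Fin n → ℝ) (hz_pos : ∀ i, 0 < z i)
    (hz_left : z ᵥ* A = 0) (hz_sum : ∑ i, z i = 1)
    (W : Matrix (Fin n) (Fin n) ℝ) (hW : W = vecMulVec (fun _ => (1 : ℝ)) z)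
    (lam βoff : Fin m → ℝ) (ωu : Fin n → ℝ)
    (r : Fin n → ℝ) (hr : r = k • (D *ᵥ (lam - βoff)))
    (θ0 : Fin n → ℝ) (hfeas : βoff = Bᵀ *ᵥ θ0 + lam)
    (hr0 : r = 0)
    (qs : Fin n → ℝ) (hqs : qs = (W - 1) *ᵥ ωu + W *ᵥ r)
    (θ : ℝ → Fin n → ℝ)
    (hθ : ∀ t : ℝ, 0 ≤ t → HasDerivAt θ (A *ᵥ θ t + ωu + qs + r) t)
    (βss : Fin m → ℝ)
    (hconv : Tendsto (fun t : ℝ => Bᵀ *ᵥ θ t + lam) atTop (nhds βss)) :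
    βss = βoff :=
  buffer_occupancy_tendsto_offset_general k src dst S D B hS hD hB A hA hrate hirr z hz_left hz_sum
    W hW lam βoff ωu r hr θ0 hfeas hr0 qs hqs θ hθ βss hconv
end
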